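/- arXiv:1508.00138 — 4 statements merged into one kernel-verified Lean document; each statement's English description precedes it below -/
import Mathlib

section
/- Let a ≠ 0, b ∈ ℝ, p ≥ 1, and define w_0(t) = 1 and for n ≥ 1, w_n(t) = Σ_{j=0}^{⌊(n-1)/p⌋} ((n+j-1)! b^j)/(j! (n-jp-1)! a^{n+j}) · t^{n-jp}. Then for all n ≥ 1, applying the operator Q = aD - bD^{p+1} (where D is differentiation) to w_n gives Q w_n(t) = n · w_{n-1}(t). -/
/-!
Write `w_n(t) = ∑_j c_{n,j} t^{n-jp}`. Applying `Q = aD - bD^{p+1}`, the monomial `t^{m}` with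
`m = n - 1 - (j+1)p` receives `aD` of the term `j + 1` and `bD^{p+1}` of the term `j`, so
`Q w_n = n w_{n-1}` reduces to the coefficient identity
`a c_{n,j+1} (m+1) - b c_{n,j} (m+p+1)!/m! = n c_{n-1,j+1}`, which after clearing factorials is
`(n+j)(m+1) - (j+1)(m+p+1) = n m`. For `m = 0` the right-hand side is absent and the identity
says that the two contributions cancel.
-/

/-- The basic polynomials for the delta operator `aD - bD^(p+1)`. -/
noncomputable def w (a b : ℝ) (p : ℕ) (n : ℕ) (t : ℝ) : ℝ :=
  if n = 0 then 1 else
    ∑ j ∈ Finset.range ((n - 1) / p + 1),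
      ((n + j - 1).factorial * b ^ j) /
        (j.factorial * (n - j * p - 1).factorial * a ^ (n + j)) * t ^ (n - j * p)

open Polynomial Finset Nat

theorem iteratedDeriv_eval {𝕜 : Type*} [NontriviallyNormedField 𝕜] (P : 𝕜[X]) (k : ℕ) :
    iteratedDeriv k (fun x => P.eval x) = fun x => (derivative^[k] P).eval x := by
  induction k generalizing P with
  | zero => simp
  | succ k ih =>
    rw [iteratedDeriv_succ', funext fun x => Polynomial.deriv (x := x) P, ih,
      Function.iterate_succ_apply]

section

variable (a b : ℝ) (p : ℕ)

noncomputable def wCoeff (n j : ℕ) : ℝ :=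
  ((n + j - 1)! * b ^ j) / (j ! * (n - j * p - 1)! * a ^ (n + j))

/-- The guard `j * p ≤ n - 1` is the range `j ≤ ⌊(n - 1) / p⌋` of `w`; it lets `wPoly` sum over
the uniform range `j ≤ n`, so that applying `deltaOp` is a single shift of the index. -/
noncomputable def wTerm (n j : ℕ) : ℝ[X] :=
  if j * p ≤ n - 1 then C (wCoeff a b p n j) * X ^ (n - j * p) else 0

noncomputable def wPoly (n : ℕ) : ℝ[X] :=
  ∑ j ∈ range (n + 1), wTerm a b p n j

noncomputable def deltaOp (P : ℝ[X]) : ℝ[X] :=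
  C a * derivative P - C b * derivative^[p + 1] P

variable {a b p}

theorem wCoeff_zero (n : ℕ) : wCoeff a b p n 0 = (a ^ n)⁻¹ := by
  rcases n with _ | n
  · simp [wCoeff]
  · simp [wCoeff]
    field_simp

theorem wCoeff_add_mul_add_one (e j : ℕ) :
    wCoeff a b p (e + j * p + 1) j =
      (e + j * p + j)! * b ^ j / (j ! * e ! * a ^ (e + j * p + j + 1)) := by
  rw [wCoeff, show e + j * p + 1 + j - 1 = e + j * p + j by omega,
    show e + j * p + 1 - j * p - 1 = e by omega, show e + j * p + 1 + j = e + j * p + j + 1 by ring]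

theorem wCoeff_recurrence_zero (ha : a ≠ 0) (j : ℕ) :
    a * wCoeff a b p ((j + 1) * p + 1) (j + 1) -
      b * wCoeff a b p ((j + 1) * p + 1) j * (p + 1)! = 0 := by
  rw [show (j + 1) * p + 1 = 0 + (j + 1) * p + 1 by ring, wCoeff_add_mul_add_one,
    show 0 + (j + 1) * p + 1 = p + j * p + 1 by ring, wCoeff_add_mul_add_one,
    show 0 + (j + 1) * p + (j + 1) = (p + j * p + j) + 1 by ring,
    show p + j * p + j + 1 = (p + j * p + j) + 1 by ring, factorial_succ (p + j * p + j),
    factorial_succ j, factorial_succ p, pow_succ]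
  push_cast
  field_simp
  ring

theorem wCoeff_recurrence_succ (ha : a ≠ 0) (k j : ℕ) :
    a * wCoeff a b p (k + (j + 1) * p + 1 + 1) (j + 1) * (k + 2) -
        b * wCoeff a b p (k + (j + 1) * p + 1 + 1) j * (k + p + 2).descFactorial (p + 1) =
      (k + (j + 1) * p + 2) * wCoeff a b p (k + (j + 1) * p + 1) (j + 1) := by
  have hdesc : ((k + p + 2).descFactorial (p + 1) : ℝ) = (k + p + 2)! / (k + 1)! := by
    rw [eq_div_iff (by positivity)]
    have h := factorial_mul_descFactorial (by omega : p + 1 ≤ k + p + 2)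
    rw [show k + p + 2 - (p + 1) = k + 1 by omega] at h
    exact_mod_cast (mul_comm _ _).trans h
  rw [show k + (j + 1) * p + 1 + 1 = (k + 1) + (j + 1) * p + 1 by ring, wCoeff_add_mul_add_one,
    show k + 1 + (j + 1) * p + 1 = (k + p + 1) + j * p + 1 by ring, wCoeff_add_mul_add_one,
    wCoeff_add_mul_add_one, hdesc]
  set S := k + (j + 1) * p + (j + 1)
  rw [show k + 1 + (j + 1) * p + (j + 1) = S + 1 by ring, show k + p + 1 + j * p + j = S by ring,
    show k + p + 2 = k + p + 1 + 1 by rfl, factorial_succ S, factorial_succ j,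
    factorial_succ (k + p + 1), factorial_succ k, pow_succ a (S + 1)]
  push_cast
  field_simp
  simp only [S]
  push_cast
  ring

theorem w_eq_eval_wPoly (hp : 1 ≤ p) (n : ℕ) : w a b p n = fun t => (wPoly a b p n).eval t := by
  funext t
  rcases Nat.eq_zero_or_pos n with rfl | hn
  · simp [w, wPoly, wTerm, wCoeff]
  have hrange : (range (n + 1)).filter (fun j => j * p ≤ n - 1) = range ((n - 1) / p + 1) := by
    ext j
    simp only [mem_filter, mem_range, Nat.lt_succ_iff, Nat.le_div_iff_mul_le hp]
    exact ⟨And.right, fun h => ⟨(Nat.le_mul_of_pos_right j hp).trans (h.trans (Nat.sub_le n 1)), h⟩⟩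
  simp only [w, hn.ne', if_false, wPoly, wTerm, eval_finsetSum, eval_mul, eval_C, eval_pow, eval_X,
    ← sum_filter, hrange, wCoeff]

theorem wTerm_eq_zero {n j : ℕ} (h : n - 1 < j * p) : wTerm a b p n j = 0 :=
  if_neg h.not_ge

theorem iterate_derivative_wTerm_eq_zero {n j : ℕ} (h : n ≤ (j + 1) * p) :
    derivative^[p + 1] (wTerm a b p n j) = 0 := by
  rw [wTerm]
  split_ifs
  · rw [iterate_derivative_C_mul, iterate_derivative_X_pow_eq_C_mul,
      descFactorial_eq_zero_iff_lt.mpr (by rw [succ_mul] at h; omega)]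
    simp
  · simp

theorem C_mul_derivative_wTerm_zero (ha : a ≠ 0) (n : ℕ) :
    C a * derivative (wTerm a b p (n + 1) 0) = C (n + 1 : ℝ) * wTerm a b p n 0 := by
  simp only [wTerm, zero_mul, Nat.zero_le, if_true, wCoeff_zero, derivative_C_mul_X_pow,
    Nat.sub_zero, add_tsub_cancel_right, ← mul_assoc, ← C_mul]
  congr 2
  field_simp
  push_cast
  ring

theorem C_mul_derivative_wTerm_succ_sub (ha : a ≠ 0) (hp : 1 ≤ p) (n j : ℕ) :
    C a * derivative (wTerm a b p (n + 1) (j + 1)) -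
        C b * derivative^[p + 1] (wTerm a b p (n + 1) j) =
      C (n + 1 : ℝ) * wTerm a b p n (j + 1) := by
  have hjp : (j + 1) * p = j * p + p := succ_mul j p
  obtain h | rfl | ⟨k, rfl⟩ :
      n < (j + 1) * p ∨ n = (j + 1) * p ∨ ∃ k, n = k + (j + 1) * p + 1 := by
    rcases lt_trichotomy n ((j + 1) * p) with h | h | h
    exacts [.inl h, .inr (.inl h), .inr (.inr ⟨n - (j + 1) * p - 1, by omega⟩)]
  · rw [iterate_derivative_wTerm_eq_zero (by omega), wTerm_eq_zero (n := n + 1) (by omega),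
      wTerm_eq_zero (n := n) (by omega)]
    simp
  · rw [wTerm_eq_zero (n := (j + 1) * p) (by omega), wTerm, wTerm, if_pos (by omega),
      if_pos (by omega), show (j + 1) * p + 1 - (j + 1) * p = 1 by omega,
      show (j + 1) * p + 1 - j * p = p + 1 by omega, iterate_derivative_C_mul,
      iterate_derivative_X_pow_eq_C_mul, descFactorial_self, derivative_C_mul_X_pow]
    have := congrArg C (wCoeff_recurrence_zero (b := b) (p := p) ha j)
    simp only [cast_one, mul_one, Nat.sub_self, pow_zero, mul_zero, map_sub, map_mul,
      map_natCast, map_zero] at this ⊢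
    linear_combination this
  · rw [wTerm, wTerm, wTerm, if_pos (by omega), if_pos (by omega), if_pos (by omega),
      show k + (j + 1) * p + 1 + 1 - (j + 1) * p = k + 2 by omega,
      show k + (j + 1) * p + 1 + 1 - j * p = k + p + 2 by omega,
      show k + (j + 1) * p + 1 - (j + 1) * p = k + 1 by omega,
      iterate_derivative_C_mul, iterate_derivative_X_pow_eq_C_mul, derivative_C_mul_X_pow,
      show k + p + 2 - (p + 1) = k + 1 by omega]
    have := congrArg C (wCoeff_recurrence_succ (b := b) (p := p) ha k j)
    simp only [map_sub, map_mul, map_natCast, map_add, map_one, map_ofNat] at this ⊢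
    push_cast at this ⊢
    linear_combination (X ^ (k + 1) : ℝ[X]) * this

theorem deltaOp_wPoly_succ (ha : a ≠ 0) (hp : 1 ≤ p) (n : ℕ) :
    deltaOp a b p (wPoly a b p (n + 1)) = C (n + 1 : ℝ) * wPoly a b p n := by
  have hlast : wTerm a b p n (n + 1) = 0 :=
    wTerm_eq_zero (by have := Nat.le_mul_of_pos_right (n + 1) hp; omega)
  calc _ = ∑ j ∈ range (n + 1), (C a * derivative (wTerm a b p (n + 1) (j + 1)) -
          C b * derivative^[p + 1] (wTerm a b p (n + 1) j)) +
          C a * derivative (wTerm a b p (n + 1) 0) := by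
        rw [deltaOp, wPoly, derivative_sum, iterate_derivative_sum, sum_range_succ' _ (n + 1),
          sum_range_succ _ (n + 1),
          iterate_derivative_wTerm_eq_zero (by have := Nat.le_mul_of_pos_right (n + 1 + 1) hp; omega),
          add_zero, mul_add, mul_sum, mul_sum, sum_sub_distrib]
        ring
    _ = C (n + 1 : ℝ) * wPoly a b p n := by
        simp only [C_mul_derivative_wTerm_succ_sub ha hp, C_mul_derivative_wTerm_zero ha, wPoly,
          ← mul_sum, ← mul_add, ← sum_range_succ', sum_range_succ _ (n + 1), hlast, add_zero]

end

theorem stmt_0_general (a b : ℝ) (p : ℕ) (ha : a ≠ 0) (hp : 1 ≤ p) (n : ℕ) (t : ℝ) :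
    a * deriv (w a b p n) t - b * iteratedDeriv (p + 1) (w a b p n) t
      = n * w a b p (n - 1) t := by
  rw [w_eq_eval_wPoly hp, w_eq_eval_wPoly hp, iteratedDeriv_eval, Polynomial.deriv]
  rcases n with _ | n
  · simp [wPoly, wTerm]
  · simpa [deltaOp] using congrArg (eval t) (deltaOp_wPoly_succ ha hp n)

theorem stmt_0 (a b : ℝ) (p : ℕ) (ha : a ≠ 0) (hp : 1 ≤ p) (n : ℕ) (hn : 1 ≤ n) (t : ℝ) :
    a * deriv (w a b p n) t - b * iteratedDeriv (p + 1) (w a b p n) t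
      = n * w a b p (n - 1) t :=
  stmt_0_general a b p ha hp n t
end

section
/- Let a ≠ 0, b ∈ ℝ, p ≥ 1, g(x) = ax − bx^{p+1}, and let f be the formal power series compositional inverse of g. Then a·f(x)/x = B_{p+1}(b x^p / a^{p+1}) as formal power series, where B_{p+1} is the Fuss–Catalan generating function of order p+1; equivalently f(x) = (x/a) · B_{p+1}(b x^p / a^{p+1}). -/
/-!
The Raney numbers `R_{q,s}(n) = s/(qn+s) * C(qn+s, n)` satisfy
`R_{q,s+1}(n+1) = R_{q,s}(n+1) + R_{q,s+q}(n)`; by a double induction this makes their generating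
functions multiplicative in `s`, so `B_q = ∑ R_{q,1}(n) xⁿ` satisfies `B_q = 1 + x B_q^q`.
Substituting `x ↦ c xᵖ` with `c = b / a^{p+1}` shows that `x B_{p+1}(c xᵖ) / a` solves
`a g - b g^{p+1} = x`. There is at most one solution without constant term, since
`(a f - b f^{p+1}) - (a g - b g^{p+1}) = (a - S)(f - g)` where `S` has no constant term, so `a - S`
is a unit.
-/

open PowerSeries

/-- Power series with coefficient of `x^m` equal to the coefficient of `x^m` in
`B_{p+1}(b x^p / a^{p+1})`, where `B_{p+1}` is the Fuss–Catalan generating function of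
order `p+1`: only exponents `m = n*p` contribute, with coefficient
`Fuss(n) * b^n / a^{(p+1)*n}`. -/
noncomputable def fussComposed (a b : ℝ) (p : ℕ) : PowerSeries ℝ :=
  PowerSeries.mk fun m =>
    if p ∣ m then
      ((m / p * (p + 1) + 1).choose (m / p) : ℝ) / (m / p * (p + 1) + 1)
        * b ^ (m / p) / a ^ ((p + 1) * (m / p))
    else 0

-- The case `n = 0` is separate so that `raneyNumber q 0 0 = 1` rather than `0 / 0 = 0`.
noncomputable def raneyNumber {K : Type*} [Field K] (q s n : ℕ) : K :=
  if n = 0 then 1 else s / (q * n + s) * (q * n + s).choose n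

section Raney

variable {K : Type*} [Field K] {q : ℕ}

@[simp]
lemma raneyNumber_zero (q s : ℕ) : raneyNumber q s 0 = (1 : K) := if_pos rfl

@[simp]
lemma raneyNumber_zero_succ (q n : ℕ) : raneyNumber q 0 (n + 1) = (0 : K) := by
  simp [raneyNumber]

lemma raneyNumber_of_ne_zero (s : ℕ) {n : ℕ} (hn : n ≠ 0) :
    raneyNumber q s n = (s : K) / (q * n + s : ℕ) * (q * n + s).choose n := by
  rw [raneyNumber, if_neg hn]
  push_cast
  rfl

lemma raneyNumber_one (q n : ℕ) :
    raneyNumber q 1 n = ((q * n + 1).choose n : K) / (q * n + 1) := by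
  rcases eq_or_ne n 0 with rfl | hn
  · simp
  · rw [raneyNumber_of_ne_zero 1 hn]
    push_cast
    ring

variable [CharZero K]

lemma raneyNumber_succ_succ (hq : 0 < q) (s m : ℕ) :
    raneyNumber q (s + 1) (m + 1) = (raneyNumber q s (m + 1) + raneyNumber q (s + q) m : K) := by
  set N := q * (m + 1) + s with hN
  have hmN : m ≤ N := by nlinarith
  have hN0 : (N : K) ≠ 0 := Nat.cast_ne_zero.2 (by nlinarith)
  have hNK : (N : K) = q * (m + 1) + s := by rw [hN]; push_cast; ring
  have pascal : ((N + 1).choose (m + 1) : K) = (N.choose (m + 1) : K) + N.choose m := by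
    rw [Nat.choose_succ_succ']; push_cast; ring
  have absorb : (N.choose (m + 1) : K) * (m + 1) = N.choose m * (N - m) := by
    rw [← Nat.cast_sub hmN]
    exact_mod_cast Nat.choose_succ_right_eq N m
  have hlast : raneyNumber q (s + q) m = ((s + q : K) / N * N.choose m) := by
    rcases eq_or_ne m 0 with rfl | hm
    · rw [raneyNumber_zero, Nat.choose_zero_right, Nat.cast_one, mul_one, eq_div_iff hN0, hNK]
      ring
    · rw [raneyNumber_of_ne_zero _ hm, show q * m + (s + q) = N by rw [hN]; ring]
      push_cast; ring
  rw [hlast, raneyNumber_of_ne_zero _ m.succ_ne_zero, raneyNumber_of_ne_zero _ m.succ_ne_zero,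
    show q * (m + 1) + (s + 1) = N + 1 by omega, ← hN, pascal]
  have hN1 : ((N + 1 : ℕ) : K) ≠ 0 := Nat.cast_ne_zero.2 N.succ_ne_zero
  field_simp
  push_cast
  linear_combination (q : K) * absorb + ((N.choose (m + 1) : K) + N.choose m) * hNK

end Raney

noncomputable def raneySeries (K : Type*) [Field K] (q s : ℕ) : K⟦X⟧ :=
  PowerSeries.mk (raneyNumber q s)

section RaneySeries

variable {K : Type*} [Field K] {q : ℕ}

lemma raneySeries_zero (q : ℕ) : raneySeries K q 0 = 1 := by
  ext (_ | n) <;> simp [raneySeries]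

variable [CharZero K]

lemma raneySeries_succ (hq : 0 < q) (s : ℕ) :
    raneySeries K q (s + 1) = raneySeries K q s + X * raneySeries K q (s + q) := by
  ext (_ | n)
  · simp [raneySeries]
  · simp only [raneySeries, map_add, coeff_mk, coeff_succ_X_mul, raneyNumber_succ_succ hq]

lemma raneySeries_add (hq : 0 < q) (s t : ℕ) :
    raneySeries K q (s + t) = raneySeries K q s * raneySeries K q t := by
  set D : ℕ → K⟦X⟧ := fun t => raneySeries K q s * raneySeries K q t - raneySeries K q (s + t)
  -- `D (t + 1) = D t + X * D (t + q)` and `D 0 = 0` force every coefficient of `D t` to vanish.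
  have hD0 : D 0 = 0 := by simp [D, raneySeries_zero]
  have hDsucc (t : ℕ) : D (t + 1) = D t + X * D (t + q) := by
    simp only [D, ← add_assoc, raneySeries_succ hq]
    ring
  suffices h : ∀ n t, coeff n (D t) = 0 by
    have hDt : D t = 0 := PowerSeries.ext fun n => by rw [h, map_zero]
    exact (sub_eq_zero.1 hDt).symm
  intro n
  induction n with
  | zero =>
    intro t
    simp [D, raneySeries]
  | succ n ihn =>
    intro t
    induction t with
    | zero => simp [hD0]
    | succ t iht => rw [hDsucc, map_add, coeff_succ_X_mul, iht, ihn, add_zero]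

lemma raneySeries_eq_pow (hq : 0 < q) (s : ℕ) : raneySeries K q s = raneySeries K q 1 ^ s := by
  induction s with
  | zero => exact raneySeries_zero q
  | succ s ih => rw [raneySeries_add hq, ih, pow_succ]

lemma raneySeries_one_eq_one_add_X_mul_pow (hq : 0 < q) :
    raneySeries K q 1 = 1 + X * raneySeries K q 1 ^ q := by
  have h := raneySeries_succ (K := K) hq 0
  rwa [raneySeries_zero, zero_add, zero_add, raneySeries_eq_pow hq q] at h

end RaneySeries

lemma fussComposed_eq_expand_rescale {p : ℕ} (hp : p ≠ 0) (a b : ℝ) :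
    fussComposed a b p = expand p hp (rescale (b / a ^ (p + 1)) (raneySeries ℝ (p + 1) 1)) := by
  ext m
  rw [coeff_expand, fussComposed, coeff_mk]
  split_ifs with hpm
  · obtain ⟨k, rfl⟩ := hpm
    rw [Nat.mul_div_cancel_left k (Nat.pos_of_ne_zero hp), coeff_rescale, raneySeries, coeff_mk,
      raneyNumber_one, div_pow, ← pow_mul]
    push_cast
    -- `fussComposed` divides `m = p * k` by `p` in `ℝ` in its denominator
    rw [mul_div_cancel_left₀ _ (Nat.cast_ne_zero.2 hp), Nat.mul_comm k (p + 1)]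
    ring
  · rfl

lemma fussComposed_eq_one_add {p : ℕ} (hp : p ≠ 0) (a b : ℝ) :
    fussComposed a b p = 1 + C (b / a ^ (p + 1)) * X ^ p * fussComposed a b p ^ (p + 1) := by
  have hB := congrArg (fun F => expand p hp (rescale (b / a ^ (p + 1)) F))
    (raneySeries_one_eq_one_add_X_mul_pow (K := ℝ) p.succ_pos)
  simp only [map_add, map_one, map_mul, map_pow, rescale_X, expand_C, expand_X] at hB
  rwa [← fussComposed_eq_expand_rescale] at hB

lemma injOn_C_mul_sub_C_mul_pow {R : Type*} [CommRing R] {a : R} (ha : IsUnit a) (b : R)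
    {p : ℕ} (hp : p ≠ 0) :
    Set.InjOn (fun f : R⟦X⟧ => C a * f - C b * f ^ (p + 1)) {f | constantCoeff f = 0} := by
  intro f hf g hg h
  simp only [Set.mem_ofPred_eq] at hf hg h
  set S := C b * ∑ i ∈ Finset.range (p + 1), f ^ i * g ^ (p - i)
  have hS : constantCoeff S = 0 := by
    simp only [S, map_mul, map_sum, map_pow, hf, hg]
    rw [Finset.sum_eq_zero fun i _ => ?_, mul_zero]
    rcases i with _ | i
    · simp [hp]
    · simp
  have hfactor : (C a - S) * (f - g) = 0 := by
    have hgeom := geom_sum₂_mul f g (p + 1)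
    simp only [add_tsub_cancel_right] at hgeom
    linear_combination h - C b * hgeom
  have hunit : IsUnit (C a - S) := by
    rw [isUnit_iff_constantCoeff, map_sub, hS, sub_zero, constantCoeff_C]
    exact ha
  exact sub_eq_zero.1 ((hunit.mul_right_eq_zero).1 hfactor)

/-- If `f` is the compositional inverse of `g(x) = a x - b x^{p+1}` (so `f(0) = 0` and
`g(f(x)) = a f(x) - b f(x)^{p+1} = x`), then `a f(x) = x ⬝ B_{p+1}(b x^p / a^{p+1})`. -/
theorem stmt_5 (a b : ℝ) (p : ℕ) (ha : a ≠ 0) (hp : 1 ≤ p) (f : PowerSeries ℝ)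
    (hf0 : PowerSeries.constantCoeff f = 0)
    (hinv : PowerSeries.C a * f - PowerSeries.C b * f ^ (p + 1) = PowerSeries.X) :
    PowerSeries.C a * f = PowerSeries.X * fussComposed a b p := by
  have hp0 : p ≠ 0 := by omega
  set F := fussComposed a b p
  have hCa : C a * C a⁻¹ = (1 : ℝ⟦X⟧) := by rw [← map_mul, mul_inv_cancel₀ ha, map_one]
  have hF : F = 1 + C b * C a⁻¹ ^ (p + 1) * X ^ p * F ^ (p + 1) := by
    rw [← map_pow, ← map_mul, inv_pow, ← div_eq_mul_inv]
    exact fussComposed_eq_one_add hp0 a b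
  have hg : C a * (C a⁻¹ * (X * F)) - C b * (C a⁻¹ * (X * F)) ^ (p + 1) = X := by
    linear_combination (X * F) * hCa + X * hF
  have hfg : f = C a⁻¹ * (X * F) :=
    injOn_C_mul_sub_C_mul_pow ha.isUnit b hp0 hf0 (by simp) (hinv.trans hg.symm)
  rw [hfg, ← mul_assoc, hCa, one_mul]
end

section
/- Let f(x) be the formal power series satisfying a·f(x) = x + b·f(x)^{p+1} with f(0) = 0 and f'(0) = 1/a (a ≠ 0, p ≥ 1). Then exp(t·f(x)) = Σ_{n≥0} w_n(t) x^n / n!, where w_0(t) = 1 and w_n(t) = Σ_{j=0}^{⌊(n-1)/p⌋} ((n+j-1)! b^j)/(j!(n-jp-1)! a^{n+j}) t^{n-jp} for n ≥ 1. -/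
/-!
Since `x = f · (a - b fᵖ)`, Lagrange inversion predicts `[xⁿ] fᵏ = k/n · C(n+j-1, j) · bʲ / aⁿ⁺ʲ`
when `n = k + j p` with `k ≥ 1`, and `0` when `n - k` is not a nonnegative multiple of `p`; summing
`tᵏ/k! · [xⁿ] fᵏ` over `k = n - j p` then gives `w`. Instead of invoking Lagrange inversion we
check that this closed form obeys the recursion `a c(n+1, k+1) = c(n, k) + b c(n+1, k+1+p)` read
off from `a fᵏ⁺¹ = X fᵏ + b fᵏ⁺¹⁺ᵖ`, with the same boundary values as the coefficients; since
`p ≥ 1`, these determine the whole family.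
-/

open PowerSeries

namespace PowerSeries

variable {R : Type*} [CommRing R]

theorem coeff_pow_eq_zero_of_lt {f : R⟦X⟧} (hf : constantCoeff f = 0) {n k : ℕ} (h : n < k) :
    coeff n (f ^ k) = 0 :=
  X_pow_dvd_iff.mp (pow_dvd_pow_of_dvd (X_dvd_iff.mpr hf) k) n h

theorem coeff_pow_succ_recurrence {a b : R} {p : ℕ} {f : R⟦X⟧}
    (hfe : C a * f = X + C b * f ^ (p + 1)) (n k : ℕ) :
    a * coeff (n + 1) (f ^ (k + 1)) = coeff n (f ^ k) + b * coeff (n + 1) (f ^ (k + 1 + p)) := by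
  have h : C a * f ^ (k + 1) = X * f ^ k + C b * f ^ (k + 1 + p) := by
    rw [pow_succ', ← mul_assoc, hfe]
    ring
  simpa only [coeff_C_mul, map_add, coeff_succ_X_mul] using congrArg (coeff (n + 1)) h

end PowerSeries

structure PowCoeffRecurrence {R : Type*} [CommRing R] (a b : R) (p : ℕ) (c : ℕ → ℕ → R) :
    Prop where
  zero_right : ∀ n, c n 0 = if n = 0 then 1 else 0
  of_lt : ∀ {n k}, n < k → c n k = 0
  succ_succ : ∀ n k, a * c (n + 1) (k + 1) = c n k + b * c (n + 1) (k + 1 + p)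

namespace PowCoeffRecurrence

variable {R : Type*} [CommRing R] {a b : R} {p : ℕ} {c d : ℕ → ℕ → R}

theorem of_series {f : R⟦X⟧} (hf0 : constantCoeff f = 0)
    (hfe : C a * f = X + C b * f ^ (p + 1)) :
    PowCoeffRecurrence a b p fun n k => coeff n (f ^ k) where
  zero_right n := by rw [pow_zero, coeff_one]
  of_lt h := coeff_pow_eq_zero_of_lt hf0 h
  succ_succ := coeff_pow_succ_recurrence hfe

/-- Since `p > 0`, the recursion expresses `c (n+1) (k+1)` through `c n k` and an entry of the
same row further right, so induction on `n` and then downward on `k` pins `c` down. -/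
theorem unique [IsDomain R] (ha : a ≠ 0) (hp : 0 < p) (hc : PowCoeffRecurrence a b p c)
    (hd : PowCoeffRecurrence a b p d) : c = d := by
  funext n
  induction n with
  | zero =>
    funext k
    rcases Nat.eq_zero_or_pos k with rfl | hk
    · rw [hc.zero_right, hd.zero_right]
    · rw [hc.of_lt hk, hd.of_lt hk]
  | succ n ih =>
    suffices ∀ m k, n + 1 < k + m → c (n + 1) k = d (n + 1) k from
      funext fun k => this (n + 2) k (by omega)
    intro m
    induction m with
    | zero => exact fun k hk => by rw [hc.of_lt (by omega), hd.of_lt (by omega)]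
    | succ m ihm =>
      rintro (_ | k) hk
      · rw [hc.zero_right, hd.zero_right]
      · refine mul_left_cancel₀ ha ?_
        rw [hc.succ_succ, hd.succ_succ, ih, ihm _ (by omega)]

end PowCoeffRecurrence

section LagrangeCoeff

variable {K : Type*} [Field K]

noncomputable def lagrangeCoeff (a b : K) (p n k : ℕ) : K :=
  if k = 0 then (if n = 0 then 1 else 0)
  else if k ≤ n ∧ p ∣ n - k then
    k / n * (n + (n - k) / p - 1).choose ((n - k) / p) * b ^ ((n - k) / p) / a ^ (n + (n - k) / p)
  else 0

variable {a b : K} {p n k : ℕ}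

theorem lagrangeCoeff_of_lt (h : n < k) : lagrangeCoeff a b p n k = 0 := by
  simp [lagrangeCoeff, show k ≠ 0 by omega, show ¬k ≤ n by omega]

theorem lagrangeCoeff_eq_zero_of_forall_ne (h : ∀ j, n ≠ k + j * p) :
    lagrangeCoeff a b p n k = 0 := by
  unfold lagrangeCoeff
  split_ifs with hk hn hkn
  · exact absurd (by simp [hk, hn]) (h 0)
  · rfl
  · obtain ⟨hkn, j, hj⟩ := hkn
    exact absurd (by rw [mul_comm]; omega) (h j)
  · rfl

theorem lagrangeCoeff_self [CharZero K] (n : ℕ) : lagrangeCoeff a b p n n = (a ^ n)⁻¹ := by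
  rcases eq_or_ne n 0 with rfl | hn
  · simp [lagrangeCoeff]
  · simp [lagrangeCoeff, hn]

theorem lagrangeCoeff_of_eq_add_mul {j : ℕ} (hp : 0 < p) (hn : n = k + j * p) (hkj : 0 < k + j) :
    lagrangeCoeff a b p n k = k / n * (n + j - 1).choose j * b ^ j / a ^ (n + j) := by
  have hj : (n - k) / p = j := by
    rw [hn, Nat.add_sub_cancel_left, Nat.mul_div_cancel _ hp]
  rcases Nat.eq_zero_or_pos k with rfl | hk
  · simp [lagrangeCoeff, hn, hp.ne', show j ≠ 0 by omega]
  · rw [lagrangeCoeff, if_neg hk.ne', if_pos ⟨by omega, hn ▸ by simp⟩, hj]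

theorem lagrangeCoeff_succ_succ_of_eq_add_mul [CharZero K] (ha : a ≠ 0) (hp : 0 < p) {i : ℕ}
    (hn : n = k + (i + 1) * p) :
    a * lagrangeCoeff a b p (n + 1) (k + 1)
      = lagrangeCoeff a b p n k + b * lagrangeCoeff a b p (n + 1) (k + 1 + p) := by
  rw [lagrangeCoeff_of_eq_add_mul hp (by rw [hn]; ring) (by omega : 0 < k + 1 + (i + 1)),
    lagrangeCoeff_of_eq_add_mul hp hn (by omega : 0 < k + (i + 1)),
    lagrangeCoeff_of_eq_add_mul hp (by rw [hn]; ring) (by omega : 0 < k + 1 + p + i),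
    show n + 1 + (i + 1) - 1 = n + i + 1 by omega, show n + (i + 1) - 1 = n + i by omega,
    show n + 1 + i - 1 = n + i by omega, show n + 1 + (i + 1) = n + i + 1 + 1 by omega,
    show n + (i + 1) = n + i + 1 by omega, show n + 1 + i = n + i + 1 by omega,
    pow_succ _ (n + i + 1), pow_succ b i]
  have pascal : ((n + i + 1).choose (i + 1) : K) = (n + i).choose i + (n + i).choose (i + 1) := by
    exact_mod_cast Nat.choose_succ_succ (n + i) i
  have absorb : ((n + i).choose (i + 1) : K) * (i + 1) = (n + i).choose i * n := by
    have := Nat.choose_succ_right_eq (n + i) i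
    rw [Nat.add_sub_cancel] at this
    exact_mod_cast this
  have hnK : (n : K) = k + (i + 1) * p := by exact_mod_cast hn
  have hn0 : (n : K) ≠ 0 := by
    have : 0 < n := by rw [hn]; positivity
    exact_mod_cast this.ne'
  push_cast
  field_simp
  linear_combination
    b ^ i * b * (((k : K) + 1) * n * pascal + p * absorb + ((n + i).choose (i + 1) : K) * hnK)

theorem powCoeffRecurrence_lagrangeCoeff [CharZero K] (ha : a ≠ 0) (hp : 0 < p) :
    PowCoeffRecurrence a b p (lagrangeCoeff a b p) where
  zero_right n := by simp [lagrangeCoeff]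
  of_lt := lagrangeCoeff_of_lt
  succ_succ n k := by
    by_cases h : ∃ j, n = k + j * p
    · obtain ⟨_ | i, hn⟩ := h
      · obtain rfl : n = k := by simpa using hn
        rw [lagrangeCoeff_self, lagrangeCoeff_self, lagrangeCoeff_of_lt (by omega)]
        field_simp
        ring
      · exact lagrangeCoeff_succ_succ_of_eq_add_mul ha hp hn
    · simp only [not_exists] at h
      rw [lagrangeCoeff_eq_zero_of_forall_ne h, lagrangeCoeff_eq_zero_of_forall_ne,
        lagrangeCoeff_eq_zero_of_forall_ne, mul_zero, mul_zero, add_zero]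
      · exact fun j hj => h (j + 1) (by linarith)
      · exact fun j hj => h j (by linarith)

theorem coeff_pow_eq_lagrangeCoeff [CharZero K] (ha : a ≠ 0) (hp : 0 < p) {f : K⟦X⟧}
    (hf0 : constantCoeff f = 0) (hfe : C a * f = X + C b * f ^ (p + 1)) (n k : ℕ) :
    coeff n (f ^ k) = lagrangeCoeff a b p n k :=
  congrFun₂ ((PowCoeffRecurrence.of_series hf0 hfe).unique ha hp
    (powCoeffRecurrence_lagrangeCoeff ha hp)) n k

end LagrangeCoeff

section Sum

open scoped Nat

variable {K : Type*} [Field K] {a b : K} {p n : ℕ}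

theorem mem_range_pred_div_add_one_iff (hp : 0 < p) (hn : n ≠ 0) {j : ℕ} :
    j ∈ Finset.range ((n - 1) / p + 1) ↔ j * p < n := by
  rw [Finset.mem_range, Nat.lt_succ_iff, Nat.le_div_iff_mul_le hp]
  omega

theorem sum_range_mul_lagrangeCoeff (g : ℕ → K) (hp : 0 < p) (hn : n ≠ 0) :
    ∑ k ∈ Finset.range (n + 1), g k * lagrangeCoeff a b p n k
      = ∑ j ∈ Finset.range ((n - 1) / p + 1),
          g (n - j * p) * lagrangeCoeff a b p n (n - j * p) := by
  have hinj : Set.InjOn (fun j => n - j * p) (Finset.range ((n - 1) / p + 1)) := by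
    intro i hi j hj hij
    rw [Finset.mem_coe, mem_range_pred_div_add_one_iff hp hn] at hi hj
    exact Nat.eq_of_mul_eq_mul_right hp (by simp only at hij; omega)
  rw [← Finset.sum_image (f := fun k => g k * lagrangeCoeff a b p n k) hinj]
  refine (Finset.sum_subset (fun k hk => ?_) fun k _ hk => ?_).symm
  · obtain ⟨j, -, rfl⟩ := Finset.mem_image.mp hk
    exact Finset.mem_range.mpr (by omega)
  · rcases eq_or_ne k 0 with rfl | hk0
    · simp [lagrangeCoeff, hn]
    · refine mul_eq_zero_of_right _ (lagrangeCoeff_eq_zero_of_forall_ne fun j hj => hk ?_)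
      exact Finset.mem_image.mpr ⟨j, (mem_range_pred_div_add_one_iff hp hn).mpr (by omega),
        by omega⟩

theorem pow_div_factorial_mul_lagrangeCoeff [CharZero K] (t : K) {k j : ℕ} (hp : 0 < p)
    (hk : k ≠ 0) (hn : n = k + j * p) :
    t ^ k / k ! * lagrangeCoeff a b p n k
      = (n + j - 1)! * b ^ j / (j ! * (k - 1)! * a ^ (n + j)) * t ^ k / n ! := by
  rw [lagrangeCoeff_of_eq_add_mul hp hn (by omega)]
  obtain ⟨k, rfl⟩ : ∃ k', k = k' + 1 := ⟨k - 1, by omega⟩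
  obtain ⟨m, rfl⟩ : ∃ m, n = m + 1 := ⟨n - 1, by omega⟩
  have hfac : ((m + j)! : K) = (m + j).choose j * m ! * j ! := by
    exact_mod_cast (Nat.add_choose_mul_factorial_mul_factorial m j).symm
  rw [show m + 1 + j - 1 = m + j by omega, hfac, Nat.succ_sub_one, Nat.factorial_succ,
    Nat.factorial_succ]
  have := m.factorial_ne_zero
  have := j.factorial_ne_zero
  push_cast
  field_simp

end Sum

/-- The coefficient of `xⁿ` in `exp (t f) = ∑ₖ tᵏ fᵏ / k!` is a finite sum because `f` has zero
constant term. -/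
theorem stmt_6_general (a b : ℝ) (p : ℕ) (ha : a ≠ 0) (hp : 1 ≤ p) (f : PowerSeries ℝ)
    (hf0 : PowerSeries.constantCoeff f = 0)
    (hfe : PowerSeries.C a * f = PowerSeries.X + PowerSeries.C b * f ^ (p + 1))
    (t : ℝ) (n : ℕ) :
    ∑ k ∈ Finset.range (n + 1), t ^ k / k.factorial * PowerSeries.coeff n (f ^ k)
      = w a b p n t / n.factorial := by
  simp only [coeff_pow_eq_lagrangeCoeff ha hp hf0 hfe]
  rcases eq_or_ne n 0 with rfl | hn
  · simp [lagrangeCoeff, w]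
  rw [sum_range_mul_lagrangeCoeff _ hp hn, w, if_neg hn, Finset.sum_div]
  refine Finset.sum_congr rfl fun j hj => ?_
  have hjp : j * p < n := (mem_range_pred_div_add_one_iff hp hn).mp hj
  exact pow_div_factorial_mul_lagrangeCoeff t hp (by omega) (by omega)

/-- If `a f(x) = x + b f(x)^{p+1}`, `f(0) = 0`, `f'(0) = 1/a`, then
`exp (t f(x)) = ∑ w_n(t) x^n / n!`; since `f` has zero constant term, the `n`-th
coefficient of `exp (t f(x)) = ∑_k t^k f(x)^k / k!` is `∑_{k ≤ n} t^k/k! ⬝ [x^n] f^k`. -/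
theorem stmt_6 (a b : ℝ) (p : ℕ) (ha : a ≠ 0) (hp : 1 ≤ p) (f : PowerSeries ℝ)
    (hf0 : PowerSeries.constantCoeff f = 0)
    (hf1 : PowerSeries.coeff 1 f = 1 / a)
    (hfe : PowerSeries.C a * f = PowerSeries.X + PowerSeries.C b * f ^ (p + 1))
    (t : ℝ) (n : ℕ) :
    ∑ k ∈ Finset.range (n + 1), t ^ k / k.factorial * PowerSeries.coeff n (f ^ k)
      = w a b p n t / n.factorial :=
  stmt_6_general a b p ha hp f hf0 hfe t n
end

section
/- For s, t > 0, the convolution of the inverse Gaussian densities ρ_s and ρ_t equals ρ_{s+t}, where ρ_t(u) = t·exp(−(u−t)²/(2u))/√(2πu³) on (0,∞); i.e., the measures μ_t = ρ_t(u) du form a convolution semigroup. -/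
/-!
The density of `μ s ∗ μ t` at `u > 0` is `∫₀ᵘ ρ_s(x) ρ_t(u - x) dx`. The substitution
`y = (s(u - x) - t x) / √(u x (u - x))` maps `(0, u)` bijectively onto `ℝ` and separates the
exponents: `(x - s)²/x + (u - x - t)²/(u - x) = (u - s - t)²/u + y²`. After the Jacobian, the
integrand becomes `ρ_{s+t}(u) w(y) φ(y)`, where `φ` is the standard normal density and the weight
`w` satisfies `w(y) + w(-y) = 2`; since `φ` is even, the integral is `ρ_{s+t}(u)`.
-/

open Real MeasureTheory

/-- The inverse Gaussian density with both parameters equal to `t`, extended by `0`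
outside `(0, ∞)`. -/
noncomputable def ρ (t u : ℝ) : ℝ :=
  if 0 < u then t * Real.exp (-(u - t) ^ 2 / (2 * u)) / Real.sqrt (2 * π * u ^ 3) else 0

/-- The inverse Gaussian measure `μ_t = ρ_t(u) du`. -/
noncomputable def μ (t : ℝ) : Measure ℝ :=
  volume.withDensity fun u => ENNReal.ofReal (ρ t u)

open Set ProbabilityTheory
open scoped ENNReal

lemma MeasureTheory.lintegral_eq_of_add_comp_neg {G : Type*} [MeasurableSpace G] [InvolutiveNeg G]
    [MeasurableNeg G] {μ : Measure G} [μ.IsNegInvariant] {f g : G → ℝ≥0∞} (hf : Measurable f)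
    (h : ∀ z, f z + f (-z) = 2 * g z) : ∫⁻ z, f z ∂μ = ∫⁻ z, g z ∂μ := by
  refine (ENNReal.mul_right_inj two_ne_zero ENNReal.ofNat_ne_top).1 ?_
  calc 2 * ∫⁻ z, f z ∂μ = ∫⁻ z, f z ∂μ + ∫⁻ z, f (-z) ∂μ := by
        rw [lintegral_neg_eq_self, two_mul]
    _ = ∫⁻ z, 2 * g z ∂μ := by rw [← lintegral_add_left hf]; simp_rw [h]
    _ = 2 * ∫⁻ z, g z ∂μ := lintegral_const_mul' _ _ ENNReal.ofNat_ne_top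

lemma Real.abs_lt_sqrt_sq_add {c : ℝ} (hc : 0 < c) (z : ℝ) : |z| < √(z ^ 2 + c) := by
  rw [← sqrt_sq_eq_abs]
  exact sqrt_lt_sqrt (sq_nonneg z) (by linarith)

lemma Real.sqrt_two_pi_mul_pow_three {x : ℝ} (hx : 0 ≤ x) :
    √(2 * π * x ^ 3) = √(2 * π) * (x * √x) := by
  rw [show 2 * π * x ^ 3 = 2 * π * (x ^ 2 * x) by ring, sqrt_mul (by positivity),
    sqrt_mul (sq_nonneg x), sqrt_sq hx]

lemma ProbabilityTheory.gaussianPDFReal_zero_one (z : ℝ) :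
    gaussianPDFReal 0 1 z = exp (-z ^ 2 / 2) / √(2 * π) := by
  simp [gaussianPDFReal, div_eq_inv_mul]

namespace InverseGaussian

variable {s t u x : ℝ}

lemma ρ_of_nonpos (hu : u ≤ 0) : ρ t u = 0 := if_neg hu.not_gt

lemma ρ_of_pos (hu : 0 < u) :
    ρ t u = t * exp (-(u - t) ^ 2 / (2 * u)) / (√(2 * π) * (u * √u)) := by
  rw [ρ, if_pos hu, sqrt_two_pi_mul_pow_three hu.le]

lemma ρ_nonneg (ht : 0 ≤ t) (u : ℝ) : 0 ≤ ρ t u := by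
  unfold ρ; split_ifs <;> positivity

lemma measurable_ρ (t : ℝ) : Measurable (ρ t) :=
  Measurable.ite measurableSet_Ioi (by fun_prop) measurable_const

noncomputable def gaussVar (s t u x : ℝ) : ℝ := (s * (u - x) - t * x) / √(u * x * (u - x))

noncomputable def gaussVarDeriv (s t u x : ℝ) : ℝ :=
  -(u ^ 2 * (s * (u - x) + t * x)) / (2 * √(u * x * (u - x)) ^ 3)

/-- With `S = √(z² + 4st/u)`, at `z = gaussVar s t u x` one has `S + z = 2 s (u - x) / R` and
`S - z = 2 t x / R` with `R = √(u x (u - x))`; solving `s (u - x) (S - z) = t x (S + z)` for `x`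
gives this formula. -/
noncomputable def gaussVarInv (s t u z : ℝ) : ℝ :=
  s * u * (√(z ^ 2 + 4 * s * t / u) - z) /
    ((s + t) * √(z ^ 2 + 4 * s * t / u) + (t - s) * z)

noncomputable def gaussVarWeight (s t u z : ℝ) : ℝ :=
  ((s + t) * √(z ^ 2 + 4 * s * t / u) + (t - s) * z) / ((s + t) * √(z ^ 2 + 4 * s * t / u))

lemma mul_sqrt_add_mul_pos (hs : 0 < s) (ht : 0 < t) (hu : 0 < u) (z : ℝ) :
    0 < (s + t) * √(z ^ 2 + 4 * s * t / u) + (t - s) * z := by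
  obtain ⟨hzS, hzS'⟩ := abs_lt.1 (abs_lt_sqrt_sq_add (c := 4 * s * t / u) (by positivity) z)
  nlinarith [abs_nonneg z, neg_abs_le z, le_abs_self z]

lemma sqrt_gaussVar_sq_add (hs : 0 < s) (ht : 0 < t) (hx : 0 < x) (hxu : x < u) :
    √(gaussVar s t u x ^ 2 + 4 * s * t / u) = (s * (u - x) + t * x) / √(u * x * (u - x)) := by
  have hu : 0 < u := hx.trans hxu
  have hux : 0 < u - x := sub_pos.2 hxu
  have hR : √(u * x * (u - x)) ^ 2 = u * x * (u - x) := sq_sqrt (by positivity)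
  rw [← sqrt_sq (by positivity : 0 ≤ (s * (u - x) + t * x) / √(u * x * (u - x)))]
  congr 1
  rw [gaussVar, div_pow, div_pow, hR]
  field_simp
  ring

lemma gaussVarInv_gaussVar (hs : 0 < s) (ht : 0 < t) (hx : 0 < x) (hxu : x < u) :
    gaussVarInv s t u (gaussVar s t u x) = x := by
  have hu : 0 < u := hx.trans hxu
  have hux : 0 < u - x := sub_pos.2 hxu
  set R := √(u * x * (u - x))
  have hR : 0 < R := sqrt_pos.2 (by positivity)
  have hnum : (s * (u - x) + t * x) / R - (s * (u - x) - t * x) / R = 2 * t * x / R := by ring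
  have hden : (s + t) * ((s * (u - x) + t * x) / R) + (t - s) * ((s * (u - x) - t * x) / R) =
      2 * s * t * u / R := by ring
  rw [gaussVarInv, sqrt_gaussVar_sq_add hs ht hx hxu, gaussVar, hnum, hden]
  field_simp

lemma gaussVarInv_mem_Ioo (hs : 0 < s) (ht : 0 < t) (hu : 0 < u) (z : ℝ) :
    gaussVarInv s t u z ∈ Ioo 0 u := by
  have hD := mul_sqrt_add_mul_pos hs ht hu z
  obtain ⟨hzS, hzS'⟩ := abs_lt.1 (abs_lt_sqrt_sq_add (c := 4 * s * t / u) (by positivity) z)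
  rw [gaussVarInv, mem_Ioo, lt_div_iff₀ hD, div_lt_iff₀ hD]
  constructor
  · nlinarith [mul_pos (mul_pos hs hu) (sub_pos.2 hzS')]
  · nlinarith [mul_pos (mul_pos ht hu) (neg_lt_iff_pos_add.1 hzS)]

lemma gaussVar_gaussVarInv (hs : 0 < s) (ht : 0 < t) (hu : 0 < u) (z : ℝ) :
    gaussVar s t u (gaussVarInv s t u z) = z := by
  set S := √(z ^ 2 + 4 * s * t / u)
  set D := (s + t) * S + (t - s) * z
  have hD : 0 < D := mul_sqrt_add_mul_pos hs ht hu z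
  have hS : u * S ^ 2 = u * z ^ 2 + 4 * s * t := by
    rw [sq_sqrt (by positivity)]; field_simp
  have hinv : gaussVarInv s t u z = s * u * (S - z) / D := rfl
  have hsub : u - s * u * (S - z) / D = t * u * (S + z) / D := by
    field_simp; ring
  have hR : √(u * (s * u * (S - z) / D) * (t * u * (S + z) / D)) = 2 * s * t * u / D := by
    rw [← sqrt_sq (by positivity : 0 ≤ 2 * s * t * u / D)]
    congr 1
    field_simp
    linear_combination hS
  rw [gaussVar, hinv, hsub, hR]
  field_simp
  ring

lemma bijOn_gaussVar (hs : 0 < s) (ht : 0 < t) (hu : 0 < u) :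
    BijOn (gaussVar s t u) (Ioo 0 u) univ :=
  InvOn.bijOn ⟨fun _ hx => gaussVarInv_gaussVar hs ht hx.1 hx.2,
      fun z _ => gaussVar_gaussVarInv hs ht hu z⟩
    (mapsTo_univ _ _) (fun z _ => gaussVarInv_mem_Ioo hs ht hu z)

lemma hasDerivAt_gaussVar (hx : 0 < x) (hxu : x < u) :
    HasDerivAt (gaussVar s t u) (gaussVarDeriv s t u x) x := by
  have hw : 0 < u * x * (u - x) := by have := hx.trans hxu; have := sub_pos.2 hxu; positivity
  have hR : 0 < √(u * x * (u - x)) := sqrt_pos.2 hw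
  have hR2 : √(u * x * (u - x)) ^ 2 = u * x * (u - x) := sq_sqrt hw.le
  have hnum : HasDerivAt (fun y => s * (u - y) - t * y) (-(s + t)) x :=
    ((((hasDerivAt_id x).const_sub u).const_mul s).sub
      ((hasDerivAt_id x).const_mul t)).congr_deriv (by simp; ring)
  have hrad : HasDerivAt (fun y => u * y * (u - y)) (u * (u - 2 * x)) x :=
    (((hasDerivAt_id x).const_mul u).mul ((hasDerivAt_id x).const_sub u)).congr_deriv
      (by simp; ring)
  refine (hnum.div (hrad.sqrt hw.ne') hR.ne').congr_deriv ?_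
  rw [gaussVarDeriv]
  field_simp
  linear_combination (-2 * (s + t)) * hR2

lemma gaussVarWeight_gaussVar (hs : 0 < s) (ht : 0 < t) (hx : 0 < x) (hxu : x < u) :
    gaussVarWeight s t u (gaussVar s t u x) =
      2 * s * t * u / ((s + t) * (s * (u - x) + t * x)) := by
  have hux : 0 < u - x := sub_pos.2 hxu
  have hR : 0 < √(u * x * (u - x)) := sqrt_pos.2 (by have := hx.trans hxu; positivity)
  rw [gaussVarWeight, sqrt_gaussVar_sq_add hs ht hx hxu, gaussVar]
  field_simp
  ring

lemma exponent_add_exponent_eq (hx : 0 < x) (hxu : x < u) :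
    -(x - s) ^ 2 / (2 * x) + -(u - x - t) ^ 2 / (2 * (u - x)) =
      -(u - (s + t)) ^ 2 / (2 * u) + -gaussVar s t u x ^ 2 / 2 := by
  have hu : 0 < u := hx.trans hxu
  have hux : 0 < u - x := sub_pos.2 hxu
  rw [gaussVar, div_pow, sq_sqrt (by positivity)]
  field_simp
  ring

lemma ρ_mul_ρ_sub (hs : 0 < s) (ht : 0 < t) (hx : 0 < x) (hxu : x < u) :
    ρ s x * ρ t (u - x) = |gaussVarDeriv s t u x| * (ρ (s + t) u *
      gaussVarWeight s t u (gaussVar s t u x) * gaussianPDFReal 0 1 (gaussVar s t u x)) := by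
  have hu : 0 < u := hx.trans hxu
  have hux : 0 < u - x := sub_pos.2 hxu
  have hderiv : |gaussVarDeriv s t u x| =
      u ^ 2 * (s * (u - x) + t * x) / (2 * √(u * x * (u - x)) ^ 3) := by
    rw [gaussVarDeriv, neg_div, abs_neg, abs_of_pos (by positivity)]
  have hexp : exp (-(x - s) ^ 2 / (2 * x)) * exp (-(u - x - t) ^ 2 / (2 * (u - x))) =
      exp (-(u - (s + t)) ^ 2 / (2 * u)) * exp (-gaussVar s t u x ^ 2 / 2) := by
    rw [← exp_add, ← exp_add, exponent_add_exponent_eq hx hxu]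
  have hR : √(u * x * (u - x)) = √u * √x * √(u - x) := by
    rw [sqrt_mul (by positivity), sqrt_mul hu.le]
  rw [ρ_of_pos hx, ρ_of_pos hux, ρ_of_pos hu, gaussianPDFReal_zero_one, hderiv,
    gaussVarWeight_gaussVar hs ht hx hxu, hR]
  set E₁ := exp (-(x - s) ^ 2 / (2 * x))
  set E₂ := exp (-(u - x - t) ^ 2 / (2 * (u - x)))
  set E₃ := exp (-(u - (s + t)) ^ 2 / (2 * u))
  set E₄ := exp (-gaussVar s t u x ^ 2 / 2)
  have hx' := sqrt_pos.2 hx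
  have hux' := sqrt_pos.2 hux
  have hu' := sqrt_pos.2 hu
  have h2π := sqrt_pos.2 (by positivity : (0 : ℝ) < 2 * π)
  field_simp
  rw [sq_sqrt hx.le, sq_sqrt hux.le, show √u ^ 4 = u ^ 2 by rw [pow_mul' √u 2 2, sq_sqrt hu.le]]
  linear_combination (x * u ^ 2 * (u - x)) * hexp

lemma gaussVarWeight_nonneg (hs : 0 < s) (ht : 0 < t) (hu : 0 < u) (z : ℝ) :
    0 ≤ gaussVarWeight s t u z :=
  div_nonneg (mul_sqrt_add_mul_pos hs ht hu z).le (by positivity)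

lemma gaussVarWeight_add_gaussVarWeight_neg (hs : 0 < s) (ht : 0 < t) (hu : 0 < u) (z : ℝ) :
    gaussVarWeight s t u z + gaussVarWeight s t u (-z) = 2 := by
  have hS : 0 < √(z ^ 2 + 4 * s * t / u) := sqrt_pos.2 (by positivity)
  rw [gaussVarWeight, gaussVarWeight, neg_sq]
  field_simp
  ring

lemma lintegral_ofReal_ρ_mul_gaussVarWeight_mul (hs : 0 < s) (ht : 0 < t) (hu : 0 < u) :
    ∫⁻ z, ENNReal.ofReal (ρ (s + t) u * gaussVarWeight s t u z * gaussianPDFReal 0 1 z) =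
      ENNReal.ofReal (ρ (s + t) u) := by
  have hρ : 0 ≤ ρ (s + t) u := ρ_nonneg (by positivity) u
  have hH (z : ℝ) : 0 ≤ ρ (s + t) u * gaussVarWeight s t u z * gaussianPDFReal 0 1 z :=
    mul_nonneg (mul_nonneg hρ (gaussVarWeight_nonneg hs ht hu z)) (gaussianPDFReal_nonneg _ _ _)
  have hφ (z : ℝ) : gaussianPDFReal 0 1 (-z) = gaussianPDFReal 0 1 z := by
    simp only [gaussianPDFReal_zero_one, neg_sq]
  calc _ = ∫⁻ z, ENNReal.ofReal (ρ (s + t) u) * gaussianPDF 0 1 z := by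
        refine lintegral_eq_of_add_comp_neg (by unfold gaussVarWeight; fun_prop) fun z => ?_
        rw [← ENNReal.ofReal_add (hH z) (hH (-z)), gaussianPDF, ← ENNReal.ofReal_mul hρ,
          ← ENNReal.ofReal_ofNat, ← ENNReal.ofReal_mul zero_le_two, hφ]
        congr 1
        linear_combination (ρ (s + t) u * gaussianPDFReal 0 1 z) *
          gaussVarWeight_add_gaussVarWeight_neg hs ht hu z
    _ = ENNReal.ofReal (ρ (s + t) u) := by
        rw [lintegral_const_mul' _ _ ENNReal.ofReal_ne_top,
          lintegral_gaussianPDF_eq_one _ one_ne_zero, mul_one]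

lemma support_ofReal_ρ_mul_ρ_sub_subset :
    (Function.support fun x => ENNReal.ofReal (ρ s x * ρ t (u - x))) ⊆ Ioo 0 u := by
  intro x hx
  by_contra hxu
  rw [mem_Ioo, not_and_or, not_lt, not_lt] at hxu
  rcases hxu with hx0 | hux
  · simp [ρ_of_nonpos hx0] at hx
  · simp [ρ_of_nonpos (sub_nonpos.2 hux)] at hx

lemma lintegral_ofReal_ρ_mul_ρ_sub (hs : 0 < s) (ht : 0 < t) (hu : 0 < u) :
    ∫⁻ x, ENNReal.ofReal (ρ s x * ρ t (u - x)) = ENNReal.ofReal (ρ (s + t) u) := by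
  set H := fun z => ρ (s + t) u * gaussVarWeight s t u z * gaussianPDFReal 0 1 z
  have hbij := bijOn_gaussVar hs ht hu
  calc ∫⁻ x, ENNReal.ofReal (ρ s x * ρ t (u - x))
      = ∫⁻ x in Ioo 0 u, ENNReal.ofReal (ρ s x * ρ t (u - x)) :=
        (setLIntegral_eq_of_support_subset support_ofReal_ρ_mul_ρ_sub_subset).symm
    _ = ∫⁻ x in Ioo 0 u,
          ENNReal.ofReal |gaussVarDeriv s t u x| * ENNReal.ofReal (H (gaussVar s t u x)) := by
        refine setLIntegral_congr_fun measurableSet_Ioo fun x hx => ?_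
        rw [ρ_mul_ρ_sub hs ht hx.1 hx.2, ENNReal.ofReal_mul (abs_nonneg _)]
    _ = ∫⁻ z in gaussVar s t u '' Ioo 0 u, ENNReal.ofReal (H z) :=
        (lintegral_image_eq_lintegral_abs_deriv_mul measurableSet_Ioo
          (fun x hx => (hasDerivAt_gaussVar hx.1 hx.2).hasDerivWithinAt) hbij.injOn
          fun z => ENNReal.ofReal (H z)).symm
    _ = ENNReal.ofReal (ρ (s + t) u) := by
        rw [hbij.image_eq, Measure.restrict_univ,
          lintegral_ofReal_ρ_mul_gaussVarWeight_mul hs ht hu]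

lemma lconvolution_ofReal_ρ (hs : 0 < s) (ht : 0 < t) :
    (fun x => ENNReal.ofReal (ρ s x)) ⋆ₗ (fun x => ENNReal.ofReal (ρ t x)) =
      fun u => ENNReal.ofReal (ρ (s + t) u) := by
  funext u
  rw [lconvolution_def]
  simp_rw [neg_add_eq_sub, ← ENNReal.ofReal_mul (ρ_nonneg hs.le _)]
  rcases le_or_gt u 0 with hu | hu
  · have hsupp := (support_ofReal_ρ_mul_ρ_sub_subset (s := s) (t := t)).trans
      (Ioo_eq_empty_of_le hu).subset
    simp [Function.support_subset_iff'.1 hsupp, ρ_of_nonpos hu]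
  · exact lintegral_ofReal_ρ_mul_ρ_sub hs ht hu

end InverseGaussian

theorem stmt_14 (s t : ℝ) (hs : 0 < s) (ht : 0 < t) :
    (μ s).conv (μ t) = μ (s + t) := by
  rw [μ, μ, μ, conv_withDensity_eq_lconvolution (InverseGaussian.measurable_ρ s).ennreal_ofReal
    (InverseGaussian.measurable_ρ t).ennreal_ofReal, InverseGaussian.lconvolution_ofReal_ρ hs ht]
end
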